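/- Let 𝕐 be a set of objects and let 𝕏 be the set of finite binary strings. Let M : 𝕏 → P_F⁺(𝕐) be any function assigning to each binary string x a finite subset M(x) ⊆ 𝕐 of cardinality at least 2. Then for any strings x, x', x'' ∈ 𝕏 such that none of the sets M(x), M(x'), M(x'') is strictly contained in any of the other two, d_M(x,x'') ≤ d_M(x,x') + d_M(x',x''). -/
import Mathlib


noncomputable def t (x : ℝ) : ℝ := if 1 ≤ x then x else 1

noncomputable def delta {Ω : Type*} [DecidableEq Ω] (A B : Finset Ω) : ℝ :=
  Real.logb 2 (t (((B \ A).card : ℝ) * (A.card : ℝ)))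

noncomputable def infoDist {Ω : Type*} [DecidableEq Ω] (A B : Finset Ω) : ℝ :=
  max (delta A B) (delta B A)

lemma one_le_t (x : ℝ) : 1 ≤ t x := by
  unfold t; split <;> simp_all

lemma t_of_one_le {x : ℝ} (h : 1 ≤ x) : t x = x := if_pos h

lemma delta_nonneg {Ω : Type*} [DecidableEq Ω] (A B : Finset Ω) : 0 ≤ delta A B := by
  unfold delta
  have := one_le_t (((B \ A).card : ℝ) * (A.card : ℝ))
  exact Real.logb_nonneg one_lt_two this

lemma key {Ω : Type*} [DecidableEq Ω] (A B C : Finset Ω)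
    (hA : 1 ≤ A.card) (hB : 2 ≤ B.card)
    (hBA : (B \ A).Nonempty) (hCB : (C \ B).Nonempty) :
    delta A C ≤ delta A B + delta B C := by
  by_cases hCA : (C \ A).card = 0
  · unfold delta
    rw [hCA]
    simp only [Nat.cast_zero, zero_mul]
    have : t 0 = 1 := by unfold t; norm_num
    rw [this, Real.logb_one]
    have := delta_nonneg A B; have := delta_nonneg B C
    unfold delta at *
    linarith
  · have hCA' : 1 ≤ (C \ A).card := Nat.one_le_iff_ne_zero.mpr hCA
    have hBA' : 1 ≤ (B \ A).card := Finset.card_pos.mpr hBA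
    have hCB' : 1 ≤ (C \ B).card := Finset.card_pos.mpr hCB
    -- card inequality
    have hsub : C \ A ⊆ (C \ B) ∪ (B \ A) := by
      intro y hy
      simp only [Finset.mem_sdiff, Finset.mem_union] at *
      by_cases hyB : y ∈ B
      · exact Or.inr ⟨hyB, hy.2⟩
      · exact Or.inl ⟨hy.1, hyB⟩
    have hcard : (C \ A).card ≤ (C \ B).card + (B \ A).card :=
      (Finset.card_le_card hsub).trans (Finset.card_union_le _ _)
    have ha : (1 : ℝ) ≤ (A.card : ℝ) := by exact_mod_cast hA
    have hb : (2 : ℝ) ≤ (B.card : ℝ) := by exact_mod_cast hB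
    have hca : (1 : ℝ) ≤ ((C \ A).card : ℝ) := by exact_mod_cast hCA'
    have hba : (1 : ℝ) ≤ ((B \ A).card : ℝ) := by exact_mod_cast hBA'
    have hcb : (1 : ℝ) ≤ ((C \ B).card : ℝ) := by exact_mod_cast hCB'
    have hcard' : ((C \ A).card : ℝ) ≤ ((C \ B).card : ℝ) + ((B \ A).card : ℝ) := by
      exact_mod_cast hcard
    have h1 : (1 : ℝ) ≤ ((C \ A).card : ℝ) * (A.card : ℝ) := by nlinarith
    have h2 : (1 : ℝ) ≤ ((B \ A).card : ℝ) * (A.card : ℝ) := by nlinarith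
    have h3 : (1 : ℝ) ≤ ((C \ B).card : ℝ) * (B.card : ℝ) := by nlinarith
    have hmain : ((C \ A).card : ℝ) * (A.card : ℝ) ≤
        (((B \ A).card : ℝ) * (A.card : ℝ)) * (((C \ B).card : ℝ) * (B.card : ℝ)) := by
      have e1 : ((C \ B).card : ℝ) + ((B \ A).card : ℝ) ≤
          2 * (((C \ B).card : ℝ) * ((B \ A).card : ℝ)) := by nlinarith
      have e2 : ((C \ A).card : ℝ) ≤
          (B.card : ℝ) * (((C \ B).card : ℝ) * ((B \ A).card : ℝ)) := by nlinarith
      have e3 := mul_le_mul_of_nonneg_right e2 (by linarith : (0:ℝ) ≤ (A.card : ℝ))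
      nlinarith [e3]
    unfold delta
    rw [t_of_one_le h1, t_of_one_le h2, t_of_one_le h3,
      ← Real.logb_mul (by linarith) (by linarith)]
    exact Real.logb_le_logb_of_le one_lt_two (by linarith) hmain

lemma sdiff_nonempty_of_not_ssubset {Ω : Type*} [DecidableEq Ω] {A B : Finset Ω}
    (hne : A ≠ B) (h : ¬ A ⊂ B) : (A \ B).Nonempty := by
  rw [Finset.sdiff_nonempty]
  intro hsub
  exact h (lt_of_le_of_ne hsub hne)

theorem stmt_15 {Y : Type*} [DecidableEq Y] (M : List Bool → Finset Y)
    (hM : ∀ x, 2 ≤ (M x).card) (x x' x'' : List Bool)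
    (h1 : ¬ M x ⊂ M x') (h2 : ¬ M x' ⊂ M x)
    (h3 : ¬ M x ⊂ M x'') (h4 : ¬ M x'' ⊂ M x)
    (h5 : ¬ M x' ⊂ M x'') (h6 : ¬ M x'' ⊂ M x') :
    infoDist (M x) (M x'') ≤ infoDist (M x) (M x') + infoDist (M x') (M x'') := by
  set A := M x; set B := M x'; set C := M x''
  have hA : 2 ≤ A.card := hM x
  have hB : 2 ≤ B.card := hM x'
  have hC : 2 ≤ C.card := hM x''
  have hd0 : ∀ (P Q : Finset Y), 0 ≤ infoDist P Q := fun P Q =>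
    le_max_of_le_left (delta_nonneg P Q)
  by_cases hAB : A = B
  · rw [hAB]; linarith [hd0 B B, hd0 B C]
  by_cases hBC : B = C
  · rw [← hBC]; linarith [hd0 A B, hd0 B B]
  · have hBA : (B \ A).Nonempty := sdiff_nonempty_of_not_ssubset (Ne.symm hAB) h2
    have hAB' : (A \ B).Nonempty := sdiff_nonempty_of_not_ssubset hAB h1
    have hCB : (C \ B).Nonempty := sdiff_nonempty_of_not_ssubset (Ne.symm hBC) h6
    have hBC' : (B \ C).Nonempty := sdiff_nonempty_of_not_ssubset hBC h5
    have k1 : delta A C ≤ delta A B + delta B C :=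
      key A B C (by omega) hB hBA hCB
    have k2 : delta C A ≤ delta C B + delta B A :=
      key C B A (by omega) hB hBC' hAB'
    unfold infoDist
    apply max_le <;>
      linarith [le_max_left (delta A B) (delta B A), le_max_right (delta A B) (delta B A),
        le_max_left (delta B C) (delta C B), le_max_right (delta B C) (delta C B)]
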